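/- Let 𝒢 be a snake graph and let a be any edge of its first tile G_1. Then there is exactly one perfect matching P of 𝒢 such that a ∈ P and every edge of P other than a is a boundary edge of 𝒢. -/

import Mathlib

/-!
Basic definitions: tiles, snake graphs, perfect matchings, sign functions.

A tile is a unit square in the plane, identified by the coordinates of its
south-west corner.  An edge of the integer grid is encoded as a pair
`(p, b) : (ℤ × ℤ) × Bool` where `b = true` means the horizontal edge from `p`
to `p + (1,0)` and `b = false` means the vertical edge from `p` to `p + (0,1)`.

A snake graph is a sequence of tiles `G_1, …, G_d` (`d ≥ 1`) in which each
tile `G_{i+1}` is either the tile directly to the east or directly to the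
north of `G_i`; this is exactly the combinatorial content of conditions
(i)–(iii) in the definition of a snake graph.  We record the position of the
first tile and the sequence of steps (`true` = east, `false` = north).
-/

abbrev Pt : Type := ℤ × ℤ

/-- An edge of the integer grid: `(p, true)` is the horizontal unit edge with left
endpoint `p`, and `(p, false)` is the vertical unit edge with bottom endpoint `p`. -/
abbrev Edge : Type := Pt × Bool

/-- The two endpoints of an edge. -/
def Edge.ends (e : Edge) : Finset Pt :=
  {e.1, e.1 + (if e.2 then ((1 : ℤ), (0 : ℤ)) else ((0 : ℤ), (1 : ℤ)))}

/-- The south edge of the tile with south-west corner `p`. -/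
def southEdge (p : Pt) : Edge := (p, true)
/-- The north edge of the tile with south-west corner `p`. -/
def northEdge (p : Pt) : Edge := (p + ((0 : ℤ), (1 : ℤ)), true)
/-- The west edge of the tile with south-west corner `p`. -/
def westEdge (p : Pt) : Edge := (p, false)
/-- The east edge of the tile with south-west corner `p`. -/
def eastEdge (p : Pt) : Edge := (p + ((1 : ℤ), (0 : ℤ)), false)

/-- The four edges of the tile with south-west corner `p`. -/
def tileEdges (p : Pt) : Finset Edge := {southEdge p, northEdge p, westEdge p, eastEdge p}

/-- The four vertices of the tile with south-west corner `p`. -/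
def tileVerts (p : Pt) : Finset Pt :=
  {p, p + ((1 : ℤ), (0 : ℤ)), p + ((0 : ℤ), (1 : ℤ)), p + ((1 : ℤ), (1 : ℤ))}

/-- A snake graph `𝒢 = (G_1, …, G_d)`, `d ≥ 1`: a sequence of tiles in which each
tile `G_{i+1}` shares exactly one edge with `G_i`, this edge being the north edge of
`G_i` and the south edge of `G_{i+1}`, or the east edge of `G_i` and the west edge of
`G_{i+1}`.  `step i = true` means `G_{i+1}` is east of `G_i`, `step i = false` means
`G_{i+1}` is north of `G_i`; only the values `step i` for `1 ≤ i ≤ d - 1` are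
relevant. -/
structure SnakeGraph where
  d : ℕ
  one_le_d : 1 ≤ d
  base : Pt
  step : ℕ → Bool

namespace SnakeGraph

/-- The south-west corner of the `i`-th tile, `1 ≤ i ≤ d`. -/
def pos (G : SnakeGraph) (i : ℕ) : Pt :=
  G.base + ∑ j ∈ Finset.Ico 1 i,
    (if G.step j then ((1 : ℤ), (0 : ℤ)) else ((0 : ℤ), (1 : ℤ)))

/-- The set of edges of the snake graph. -/
def edges (G : SnakeGraph) : Finset Edge :=
  (Finset.Icc 1 G.d).biUnion fun i => tileEdges (G.pos i)

/-- The set of vertices of the snake graph. -/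
def verts (G : SnakeGraph) : Finset Pt :=
  (Finset.Icc 1 G.d).biUnion fun i => tileVerts (G.pos i)

/-- The interior edge `e_i` shared by the tiles `G_i` and `G_{i+1}` (`1 ≤ i ≤ d-1`). -/
def intEdge (G : SnakeGraph) (i : ℕ) : Edge :=
  if G.step i then eastEdge (G.pos i) else northEdge (G.pos i)

/-- An edge is interior if it is one of the edges `e_1, …, e_{d-1}`. -/
def IsInteriorEdge (G : SnakeGraph) (e : Edge) : Prop :=
  ∃ i, 1 ≤ i ∧ i < G.d ∧ e = G.intEdge i

/-- A boundary edge is an edge of the snake graph which is not interior. -/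
def IsBoundaryEdge (G : SnakeGraph) (e : Edge) : Prop :=
  e ∈ G.edges ∧ ¬ G.IsInteriorEdge e

/-- A perfect matching of the snake graph: a set of edges of `G` such that every
vertex of `G` is incident to exactly one edge of the set. -/
def IsPerfectMatching (G : SnakeGraph) (P : Finset Edge) : Prop :=
  (∀ e ∈ P, e ∈ G.edges) ∧ ∀ v ∈ G.verts, ∃! e, e ∈ P ∧ v ∈ Edge.ends e

/-- A sign function on the snake graph: on every tile the north and west edges have
the same sign, the south and east edges have the same sign, and the signs of the
north and south edges are opposite.  (Signs are encoded as `Bool`.) -/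
def IsSignFunction (G : SnakeGraph) (f : Edge → Bool) : Prop :=
  ∀ i, 1 ≤ i → i ≤ G.d →
    f (northEdge (G.pos i)) = f (westEdge (G.pos i)) ∧
    f (southEdge (G.pos i)) = f (eastEdge (G.pos i)) ∧
    f (northEdge (G.pos i)) = ! f (southEdge (G.pos i))

end SnakeGraph


/-!
Cut the snake after its `n`-th tile. Tile `n + 1` shares with the first `n` tiles only the
interior edge `e_n = xy`, and brings two new vertices `u, w`, the side edges `xu`, `yw` and the
opposite edge `uw`. A boundary matching through `a` of the larger graph either contains `uw`, and
removing it leaves a boundary matching of the smaller graph (which contains `e_n` only if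
`e_n = a`, since `e_n` is now interior), or it covers `u` and `w` by the two side edges, and
replacing them by `e_n` leaves a boundary matching of the smaller graph containing `e_n ≠ a`.
The inverse operations turn every boundary matching of the smaller graph into one of the larger
graph, so uniqueness passes from `n` to `n + 1`. A single tile is the edge `a` with a tile glued
along it.

That tile `n + 1` meets the first `n` tiles only in `e_n` is seen on the diagonals
`level (i, j) = i + j`: tile `k` has its south-west corner on level `level G₁ + k - 1`.
-/

section ExactCover

variable {ι α : Type*} [DecidableEq α]

def IsExactCover (f : ι → Finset α) (s : Finset ι) (V : Finset α) : Prop :=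
  (s : Set ι).PairwiseDisjoint f ∧ s.biUnion f = V

namespace IsExactCover

variable {f : ι → Finset α} {s : Finset ι} {V : Finset α} {i j : ι} {v : α}

theorem subset (h : IsExactCover f s V) (hi : i ∈ s) : f i ⊆ V :=
  h.2 ▸ Finset.subset_biUnion_of_mem f hi

theorem exists_mem (h : IsExactCover f s V) (hv : v ∈ V) : ∃ i ∈ s, v ∈ f i := by
  rwa [← h.2, Finset.mem_biUnion] at hv

theorem eq_of_mem (h : IsExactCover f s V) (hi : i ∈ s) (hj : j ∈ s) (hvi : v ∈ f i)
    (hvj : v ∈ f j) : i = j :=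
  by_contra fun hij => Finset.disjoint_left.1 (h.1 hi hj hij) hvi hvj

protected theorem insert [DecidableEq ι] (h : IsExactCover f s V) (hi : Disjoint (f i) V) :
    IsExactCover f (insert i s) (f i ∪ V) := by
  refine ⟨?_, by rw [Finset.biUnion_insert, h.2]⟩
  rw [Finset.coe_insert]
  exact h.1.insert fun j hj _ => hi.mono_right (h.subset hj)

protected theorem erase [DecidableEq ι] (h : IsExactCover f s V) (hi : i ∈ s) :
    IsExactCover f (s.erase i) (V \ f i) := by
  refine ⟨h.1.subset (by simp), Finset.ext fun v => ?_⟩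
  simp only [Finset.mem_biUnion, Finset.mem_erase, Finset.mem_sdiff]
  constructor
  · rintro ⟨j, ⟨hji, hj⟩, hv⟩
    exact ⟨h.subset hj hv, fun hvi => hji (h.eq_of_mem hj hi hv hvi)⟩
  · rintro ⟨hv, hvi⟩
    obtain ⟨j, hj, hvj⟩ := h.exists_mem hv
    exact ⟨j, ⟨fun hji => hvi (hji ▸ hvj), hj⟩, hvj⟩

end IsExactCover

theorem isExactCover_iff_existsUnique {f : ι → Finset α} {s : Finset ι} {V : Finset α}
    (hs : ∀ i ∈ s, f i ⊆ V) :
    IsExactCover f s V ↔ ∀ v ∈ V, ∃! i, i ∈ s ∧ v ∈ f i := by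
  refine ⟨fun h v hv => ?_, fun h => ⟨fun i hi j hj hij => ?_, ?_⟩⟩
  · obtain ⟨i, hi, hvi⟩ := h.exists_mem hv
    exact ⟨i, ⟨hi, hvi⟩, fun j ⟨hj, hvj⟩ => h.eq_of_mem hj hi hvj hvi⟩
  · refine Finset.disjoint_left.2 fun v hvi hvj => hij ?_
    exact (h v (hs i hi hvi)).unique ⟨hi, hvi⟩ ⟨hj, hvj⟩
  · refine Finset.Subset.antisymm (Finset.biUnion_subset.2 hs) fun v hv => ?_
    obtain ⟨i, ⟨hi, hvi⟩, -⟩ := h v hv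
    exact Finset.mem_biUnion.2 ⟨i, hi, hvi⟩

end ExactCover

theorem Edge.ne_of_mem_ends {e f : Edge} {v : Pt} (he : v ∈ e.ends) (hf : v ∉ f.ends) :
    e ≠ f :=
  fun h => hf (h ▸ he)

theorem ends_subset_tileVerts {p : Pt} {e : Edge} (he : e ∈ tileEdges p) :
    e.ends ⊆ tileVerts p := by
  obtain ⟨i, j⟩ := p
  simp only [tileEdges, Finset.mem_insert, Finset.mem_singleton] at he
  rcases he with rfl | rfl | rfl | rfl <;>
    simp [Finset.subset_iff, tileVerts, southEdge, northEdge, westEdge, eastEdge, Edge.ends]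

theorem exists_square_of_mem_tileEdges {p : Pt} {e : Edge} (he : e ∈ tileEdges p) :
    ∃ (x y u w : Pt) (s₁ s₂ o : Edge), tileEdges p = {e, s₁, s₂, o} ∧
      tileVerts p = {x, y, u, w} ∧ e.ends = {x, y} ∧ s₁.ends = {x, u} ∧ s₂.ends = {y, w} ∧
      o.ends = {u, w} ∧ x ≠ y ∧ u ≠ w ∧ u ∉ e.ends ∧ w ∉ e.ends := by
  obtain ⟨i, j⟩ := p
  simp only [tileEdges, Finset.mem_insert, Finset.mem_singleton] at he
  rcases he with rfl | rfl | rfl | rfl <;> [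
    refine ⟨(i, j), (i + 1, j), (i, j + 1), (i + 1, j + 1), westEdge (i, j), eastEdge (i, j),
      northEdge (i, j), ?_⟩;
    refine ⟨(i, j + 1), (i + 1, j + 1), (i, j), (i + 1, j), westEdge (i, j), eastEdge (i, j),
      southEdge (i, j), ?_⟩;
    refine ⟨(i, j), (i, j + 1), (i + 1, j), (i + 1, j + 1), southEdge (i, j), northEdge (i, j),
      eastEdge (i, j), ?_⟩;
    refine ⟨(i + 1, j), (i + 1, j + 1), (i, j), (i, j + 1), southEdge (i, j), northEdge (i, j),
      westEdge (i, j), ?_⟩] <;>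
  simp [tileEdges, tileVerts, southEdge, northEdge, westEdge, eastEdge, Edge.ends,
    Finset.ext_iff] <;> grind

def level (v : Pt) : ℤ := v.1 + v.2

theorem level_le_of_mem_tileVerts {p v : Pt} (hv : v ∈ tileVerts p) : level v ≤ level p + 2 := by
  obtain ⟨i, j⟩ := p
  simp only [tileVerts, Finset.mem_insert, Finset.mem_singleton] at hv
  rcases hv with rfl | rfl | rfl | rfl <;> simp [level] <;> omega

theorem eq_of_mem_tileVerts_of_level_le {p v : Pt} (hv : v ∈ tileVerts p)
    (hl : level v ≤ level p) : v = p := by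
  obtain ⟨i, j⟩ := p
  simp only [tileVerts, Finset.mem_insert, Finset.mem_singleton] at hv
  rcases hv with rfl | rfl | rfl | rfl <;> simp [level] at hl ⊢
  omega

structure GridGraph where
  verts : Finset Pt
  edges : Finset Edge
  interior : Set Edge
  ends_subset : ∀ e ∈ edges, e.ends ⊆ verts
  interior_subset : interior ⊆ edges

namespace GridGraph

def IsBoundaryMatching (Γ : GridGraph) (a : Edge) (P : Finset Edge) : Prop :=
  P ⊆ Γ.edges ∧ IsExactCover Edge.ends P Γ.verts ∧ a ∈ P ∧ ∀ e ∈ P, e ≠ a → e ∉ Γ.interior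

theorem isBoundaryMatching_congr {Γ Δ : GridGraph} {a : Edge} {P : Finset Edge}
    (hV : Γ.verts = Δ.verts) (hE : Γ.edges = Δ.edges)
    (hI : ∀ e ≠ a, e ∈ Γ.interior ↔ e ∈ Δ.interior) :
    Γ.IsBoundaryMatching a P ↔ Δ.IsBoundaryMatching a P := by
  simp only [IsBoundaryMatching, hV, hE]
  exact and_congr_right' <| and_congr_right' <| and_congr_right' <|
    forall₂_congr fun e _ => imp_congr_right fun hea => not_congr (hI e hea)

def edgeGraph (a : Edge) : GridGraph where
  verts := a.ends
  edges := {a}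
  interior := ∅
  ends_subset e he := by rw [Finset.mem_singleton.1 he]
  interior_subset := Set.empty_subset _

theorem existsUnique_isBoundaryMatching_edgeGraph (a : Edge) :
    ∃! P, (edgeGraph a).IsBoundaryMatching a P :=
  ⟨{a}, ⟨subset_rfl, ⟨by simp, by simp [edgeGraph]⟩, Finset.mem_singleton_self a,
    fun _ _ _ h => h⟩,
    fun _ hP => Finset.Subset.antisymm hP.1 (Finset.singleton_subset_iff.2 hP.2.2.1)⟩

end GridGraph

structure SquareGluing (Γ Δ : GridGraph) where
  x : Pt
  y : Pt
  u : Pt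
  w : Pt
  shared : Edge
  side₁ : Edge
  side₂ : Edge
  opp : Edge
  ends_shared : shared.ends = {x, y}
  ends_side₁ : side₁.ends = {x, u}
  ends_side₂ : side₂.ends = {y, w}
  ends_opp : opp.ends = {u, w}
  x_ne_y : x ≠ y
  u_ne_w : u ≠ w
  u_notMem : u ∉ Γ.verts
  w_notMem : w ∉ Γ.verts
  shared_mem : shared ∈ Γ.edges
  shared_notMem_interior : shared ∉ Γ.interior
  verts_eq : Δ.verts = opp.ends ∪ Γ.verts
  edges_eq : Δ.edges = insert side₁ (insert side₂ (insert opp Γ.edges))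
  interior_eq : Δ.interior = insert shared Γ.interior

namespace SquareGluing

variable {Γ Δ : GridGraph} (S : SquareGluing Γ Δ) {a : Edge} {P : Finset Edge}

theorem x_mem : S.x ∈ Γ.verts := Γ.ends_subset _ S.shared_mem (by simp [S.ends_shared])

theorem y_mem : S.y ∈ Γ.verts := Γ.ends_subset _ S.shared_mem (by simp [S.ends_shared])

theorem x_ne_u : S.x ≠ S.u := ne_of_mem_of_not_mem S.x_mem S.u_notMem

theorem x_ne_w : S.x ≠ S.w := ne_of_mem_of_not_mem S.x_mem S.w_notMem

theorem y_ne_u : S.y ≠ S.u := ne_of_mem_of_not_mem S.y_mem S.u_notMem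

theorem y_ne_w : S.y ≠ S.w := ne_of_mem_of_not_mem S.y_mem S.w_notMem

theorem opp_disjoint : Disjoint S.opp.ends Γ.verts := by
  simp [S.ends_opp, S.u_notMem, S.w_notMem]

theorem side₁_notMem : S.side₁ ∉ Γ.edges :=
  fun h => S.u_notMem (Γ.ends_subset _ h (by simp [S.ends_side₁]))

theorem side₂_notMem : S.side₂ ∉ Γ.edges :=
  fun h => S.w_notMem (Γ.ends_subset _ h (by simp [S.ends_side₂]))

theorem opp_notMem : S.opp ∉ Γ.edges :=
  fun h => S.u_notMem (Γ.ends_subset _ h (by simp [S.ends_opp]))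

theorem side₁_ne_side₂ : S.side₁ ≠ S.side₂ :=
  Edge.ne_of_mem_ends (v := S.x) (by simp [S.ends_side₁])
    (by simp [S.ends_side₂, S.x_ne_y, S.x_ne_w])

theorem side₁_ne_opp : S.side₁ ≠ S.opp :=
  Edge.ne_of_mem_ends (v := S.x) (by simp [S.ends_side₁])
    (by simp [S.ends_opp, S.x_ne_u, S.x_ne_w])

theorem side₂_ne_opp : S.side₂ ≠ S.opp :=
  Edge.ne_of_mem_ends (v := S.y) (by simp [S.ends_side₂])
    (by simp [S.ends_opp, S.y_ne_u, S.y_ne_w])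

theorem mem_edges {e : Edge} (he : e ∈ Δ.edges) :
    e = S.side₁ ∨ e = S.side₂ ∨ e = S.opp ∨ e ∈ Γ.edges := by
  simpa [S.edges_eq] using he

theorem interior_subset_interior (S : SquareGluing Γ Δ) : Γ.interior ⊆ Δ.interior :=
  S.interior_eq ▸ Set.subset_insert _ _

theorem notMem_interior (S : SquareGluing Γ Δ) {e : Edge} (he : e ∉ Γ.interior)
    (hne : e ≠ S.shared) : e ∉ Δ.interior := by
  rw [S.interior_eq]
  rintro (rfl | hI)
  exacts [hne rfl, he hI]

theorem notMem_interior_of_notMem (S : SquareGluing Γ Δ) {e : Edge} (he : e ∉ Γ.edges) :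
    e ∉ Δ.interior :=
  S.notMem_interior (fun hI => he (Γ.interior_subset hI)) fun h => he (h ▸ S.shared_mem)

theorem isExactCover_replace_shared (h : IsExactCover Edge.ends P Γ.verts) (hs : S.shared ∈ P) :
    IsExactCover Edge.ends (insert S.side₁ (insert S.side₂ (P.erase S.shared))) Δ.verts := by
  have hx := S.x_mem
  have hy := S.y_mem
  have hu := S.u_notMem
  have hw := S.w_notMem
  have h₂ := (h.erase hs).insert (i := S.side₂) ?_
  have h₁ := h₂.insert (i := S.side₁) ?_
  · convert h₁ using 1
    rw [S.verts_eq, S.ends_opp, S.ends_side₁, S.ends_side₂, S.ends_shared]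
    ext v
    simp only [Finset.mem_union, Finset.mem_insert, Finset.mem_singleton, Finset.mem_sdiff]
    grind
  all_goals
    rw [Finset.disjoint_left]
    simp only [S.ends_side₁, S.ends_side₂, S.ends_shared, Finset.mem_union,
      Finset.mem_insert, Finset.mem_singleton, Finset.mem_sdiff]
    grind [S.x_ne_y, S.u_ne_w]

theorem isExactCover_replace_sides (h : IsExactCover Edge.ends P Δ.verts) (hs₁ : S.side₁ ∈ P)
    (hs₂ : S.side₂ ∈ P) :
    IsExactCover Edge.ends (insert S.shared ((P.erase S.side₁).erase S.side₂)) Γ.verts := by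
  have hx := S.x_mem
  have hy := S.y_mem
  have hu := S.u_notMem
  have hw := S.w_notMem
  have h' := (h.erase hs₁).erase (Finset.mem_erase.2 ⟨S.side₁_ne_side₂.symm, hs₂⟩)
  have h'' := h'.insert (i := S.shared) ?_
  · convert h'' using 1
    rw [S.verts_eq, S.ends_opp, S.ends_side₁, S.ends_side₂, S.ends_shared]
    ext v
    simp only [Finset.mem_union, Finset.mem_insert, Finset.mem_singleton, Finset.mem_sdiff]
    grind
  · rw [Finset.disjoint_left]
    simp only [S.verts_eq, S.ends_opp, S.ends_side₁, S.ends_side₂, S.ends_shared,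
      Finset.mem_union, Finset.mem_insert, Finset.mem_singleton, Finset.mem_sdiff]
    grind

def extend (a : Edge) (P : Finset Edge) : Finset Edge :=
  if S.shared ∈ P ∧ S.shared ≠ a then insert S.side₁ (insert S.side₂ (P.erase S.shared))
  else insert S.opp P

def restrict (P : Finset Edge) : Finset Edge :=
  if S.opp ∈ P then P.erase S.opp else insert S.shared ((P.erase S.side₁).erase S.side₂)

theorem isBoundaryMatching_extend (hP : Γ.IsBoundaryMatching a P) :
    Δ.IsBoundaryMatching a (S.extend a P) := by
  obtain ⟨hPE, hcov, haP, hbd⟩ := hP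
  unfold extend
  split_ifs with hsh
  · refine ⟨?_, ?_, by simp [haP, Ne.symm hsh.2], fun e he hea => ?_⟩
    · intro e he
      rw [S.edges_eq]
      simp only [Finset.mem_insert, Finset.mem_erase] at he ⊢
      rcases he with rfl | rfl | ⟨-, he⟩
      exacts [.inl rfl, .inr (.inl rfl), .inr (.inr (.inr (hPE he)))]
    · exact S.isExactCover_replace_shared hcov hsh.1
    · simp only [Finset.mem_insert, Finset.mem_erase] at he
      rcases he with rfl | rfl | ⟨hne, he⟩
      · exact S.notMem_interior_of_notMem S.side₁_notMem
      · exact S.notMem_interior_of_notMem S.side₂_notMem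
      · exact S.notMem_interior (hbd e he hea) hne
  · refine ⟨?_, ?_, Finset.mem_insert_of_mem haP, fun e he hea => ?_⟩
    · rw [S.edges_eq]
      exact Finset.insert_subset (by simp) fun e he => by simp [hPE he]
    · rw [S.verts_eq]
      exact hcov.insert S.opp_disjoint
    · rcases Finset.mem_insert.1 he with rfl | he
      · exact S.notMem_interior_of_notMem S.opp_notMem
      · exact S.notMem_interior (hbd e he hea) fun h => hsh ⟨h ▸ he, h ▸ hea⟩

theorem sides_notMem_of_opp_mem (hP : Δ.IsBoundaryMatching a P) (ho : S.opp ∈ P) :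
    S.side₁ ∉ P ∧ S.side₂ ∉ P :=
  ⟨fun h => S.side₁_ne_opp <| hP.2.1.eq_of_mem h ho (v := S.u) (by simp [S.ends_side₁])
      (by simp [S.ends_opp]),
    fun h => S.side₂_ne_opp <| hP.2.1.eq_of_mem h ho (v := S.w) (by simp [S.ends_side₂])
      (by simp [S.ends_opp])⟩

theorem sides_mem_of_opp_notMem (hP : Δ.IsBoundaryMatching a P) (ho : S.opp ∉ P) :
    S.side₁ ∈ P ∧ S.side₂ ∈ P := by
  obtain ⟨e₁, he₁, hue₁⟩ := hP.2.1.exists_mem (v := S.u) (by simp [S.verts_eq, S.ends_opp])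
  obtain ⟨e₂, he₂, hwe₂⟩ := hP.2.1.exists_mem (v := S.w) (by simp [S.verts_eq, S.ends_opp])
  constructor
  · rcases S.mem_edges (hP.1 he₁) with rfl | rfl | rfl | h
    · exact he₁
    · simp [S.ends_side₂, S.y_ne_u.symm, S.u_ne_w] at hue₁
    · exact absurd he₁ ho
    · exact absurd (Γ.ends_subset _ h hue₁) S.u_notMem
  · rcases S.mem_edges (hP.1 he₂) with rfl | rfl | rfl | h
    · simp [S.ends_side₁, S.x_ne_w.symm, S.u_ne_w.symm] at hwe₂
    · exact he₂
    · exact absurd he₂ ho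
    · exact absurd (Γ.ends_subset _ h hwe₂) S.w_notMem

theorem shared_notMem_of_side₁_mem (hP : Δ.IsBoundaryMatching a P) (h : S.side₁ ∈ P) :
    S.shared ∉ P := fun hs =>
  S.side₁_notMem <| hP.2.1.eq_of_mem hs h (v := S.x) (by simp [S.ends_shared])
    (by simp [S.ends_side₁]) ▸ S.shared_mem

theorem isBoundaryMatching_restrict (hP : Δ.IsBoundaryMatching a P) (ha : a ∈ Γ.edges) :
    Γ.IsBoundaryMatching a (S.restrict P) := by
  have hcov := hP.2.1
  have hbd : ∀ e ∈ P, e ≠ a → e ∉ Γ.interior := fun e he hea hI =>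
    hP.2.2.2 e he hea (S.interior_subset_interior hI)
  unfold restrict
  split_ifs with ho
  · obtain ⟨hs₁, hs₂⟩ := S.sides_notMem_of_opp_mem hP ho
    refine ⟨fun e he => ?_, ?_, ?_, fun e he => hbd e (Finset.mem_of_mem_erase he)⟩
    · obtain ⟨hne, he⟩ := Finset.mem_erase.1 he
      rcases S.mem_edges (hP.1 he) with rfl | rfl | rfl | h
      exacts [absurd he hs₁, absurd he hs₂, absurd rfl hne, h]
    · simpa [S.verts_eq, Finset.union_sdiff_cancel_left S.opp_disjoint] using hcov.erase ho
    · exact Finset.mem_erase.2 ⟨fun h => S.opp_notMem (h ▸ ha), hP.2.2.1⟩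
  · obtain ⟨hs₁, hs₂⟩ := S.sides_mem_of_opp_notMem hP ho
    have hQ : ∀ e ∈ (P.erase S.side₁).erase S.side₂, e ∈ P ∧ e ≠ S.side₁ ∧ e ≠ S.side₂ := by
      simp only [Finset.mem_erase]
      tauto
    refine ⟨Finset.insert_subset S.shared_mem fun e he => ?_, ?_, ?_, fun e he hea => ?_⟩
    · obtain ⟨he, h₁, h₂⟩ := hQ e he
      rcases S.mem_edges (hP.1 he) with rfl | rfl | rfl | h
      exacts [absurd rfl h₁, absurd rfl h₂, absurd he ho, h]
    · exact S.isExactCover_replace_sides hcov hs₁ hs₂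
    · refine Finset.mem_insert_of_mem (Finset.mem_erase.2 ⟨?_, Finset.mem_erase.2 ⟨?_, hP.2.2.1⟩⟩)
      exacts [fun h => S.side₂_notMem (h ▸ ha), fun h => S.side₁_notMem (h ▸ ha)]
    · rcases Finset.mem_insert.1 he with rfl | he
      exacts [S.shared_notMem_interior, hbd e (hQ e he).1 hea]

theorem extend_restrict (hP : Δ.IsBoundaryMatching a P) : S.extend a (S.restrict P) = P := by
  unfold restrict
  split_ifs with ho
  · have hsh : ¬(S.shared ∈ P.erase S.opp ∧ S.shared ≠ a) := fun ⟨h, hne⟩ =>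
      hP.2.2.2 _ (Finset.mem_of_mem_erase h) hne (S.interior_eq ▸ Set.mem_insert _ _)
    rw [extend, if_neg hsh, Finset.insert_erase ho]
  · obtain ⟨hs₁, hs₂⟩ := S.sides_mem_of_opp_notMem hP ho
    have hsh := S.shared_notMem_of_side₁_mem hP hs₁
    have hshQ : S.shared ∉ (P.erase S.side₁).erase S.side₂ :=
      fun h => hsh (Finset.mem_of_mem_erase (Finset.mem_of_mem_erase h))
    rw [extend, if_pos ⟨Finset.mem_insert_self _ _, fun h => hsh (h ▸ hP.2.2.1)⟩,
      Finset.erase_insert hshQ,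
      Finset.insert_erase (Finset.mem_erase.2 ⟨S.side₁_ne_side₂.symm, hs₂⟩),
      Finset.insert_erase hs₁]

theorem existsUnique_isBoundaryMatching (S : SquareGluing Γ Δ)
    (h : ∃! P, Γ.IsBoundaryMatching a P) : ∃! P, Δ.IsBoundaryMatching a P := by
  obtain ⟨P₀, hP₀, huniq⟩ := h
  refine ⟨S.extend a P₀, S.isBoundaryMatching_extend hP₀, fun P hP => ?_⟩
  rw [← S.extend_restrict hP, huniq _ (S.isBoundaryMatching_restrict hP (hP₀.1 hP₀.2.2.1))]

theorem nonempty_of_mem_tileEdges {p : Pt} {e : Edge} (he : e ∈ tileEdges p)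
    (heΓ : e ∈ Γ.edges) (hint : e ∉ Γ.interior)
    (hV : ∀ v ∈ tileVerts p, v ∈ Γ.verts → v ∈ e.ends)
    (hΔV : Δ.verts = tileVerts p ∪ Γ.verts) (hΔE : Δ.edges = tileEdges p ∪ Γ.edges)
    (hΔI : Δ.interior = insert e Γ.interior) : Nonempty (SquareGluing Γ Δ) := by
  obtain ⟨x, y, u, w, s₁, s₂, o, hE, hT, hee, hs₁, hs₂, ho, hxy, huw, hu, hw⟩ :=
    exists_square_of_mem_tileEdges he
  have hx : x ∈ Γ.verts := Γ.ends_subset e heΓ (by simp [hee])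
  have hy : y ∈ Γ.verts := Γ.ends_subset e heΓ (by simp [hee])
  refine ⟨⟨x, y, u, w, e, s₁, s₂, o, hee, hs₁, hs₂, ho, hxy, huw,
    fun h => hu (hV u (by simp [hT]) h), fun h => hw (hV w (by simp [hT]) h), heΓ, hint,
    ?_, ?_, hΔI⟩⟩
  · rw [hΔV, hT, ho]
    ext v
    simp only [Finset.mem_union, Finset.mem_insert, Finset.mem_singleton]
    grind
  · rw [hΔE, hE]
    ext f
    simp only [Finset.mem_union, Finset.mem_insert, Finset.mem_singleton]
    grind

end SquareGluing

theorem GridGraph.existsUnique_isBoundaryMatching_of_tile {Δ : GridGraph} {p : Pt} {a : Edge}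
    (ha : a ∈ tileEdges p) (hV : Δ.verts = tileVerts p) (hE : Δ.edges = tileEdges p)
    (hI : Δ.interior ⊆ {a}) : ∃! P, Δ.IsBoundaryMatching a P := by
  -- Gluing the tile to `edgeGraph a` makes `a` interior, which matchings through `a` ignore.
  let Δ' : GridGraph := { Δ with interior := {a}, interior_subset := by simpa [hE] }
  have hΔ' : ∀ P, Δ'.IsBoundaryMatching a P ↔ Δ.IsBoundaryMatching a P :=
    fun P => isBoundaryMatching_congr rfl rfl fun e hea => by
      simp only [Δ', Set.mem_singleton_iff, hea, false_iff]
      exact fun h => hea (hI h)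
  obtain ⟨S⟩ : Nonempty (SquareGluing (edgeGraph a) Δ') :=
    SquareGluing.nonempty_of_mem_tileEdges ha (Finset.mem_singleton_self a) (Set.notMem_empty a)
      (fun _ _ h => h) (by simp [Δ', edgeGraph, hV, ends_subset_tileVerts ha])
      (by simp [Δ', edgeGraph, hE, ha]) (by simp [Δ', edgeGraph])
  simpa only [hΔ'] using
    S.existsUnique_isBoundaryMatching (existsUnique_isBoundaryMatching_edgeGraph a)

namespace SnakeGraph

variable (G : SnakeGraph)

theorem pos_succ {i : ℕ} (hi : 1 ≤ i) :
    G.pos (i + 1) = G.pos i + if G.step i then ((1 : ℤ), (0 : ℤ)) else ((0 : ℤ), (1 : ℤ)) := by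
  rw [pos, Finset.sum_Ico_succ_top hi, ← add_assoc, ← pos]

theorem level_pos {i : ℕ} (hi : 1 ≤ i) : level (G.pos i) = level G.base + i - 1 := by
  induction i, hi using Nat.le_induction with
  | base => simp [pos]
  | succ i hi ih =>
    rw [G.pos_succ hi]
    split_ifs <;> simp [level] at ih ⊢ <;> omega

theorem intEdge_mem_tileEdges (i : ℕ) : G.intEdge i ∈ tileEdges (G.pos i) := by
  unfold intEdge
  split_ifs <;> simp [tileEdges]

theorem intEdge_mem_tileEdges_succ {i : ℕ} (hi : 1 ≤ i) :
    G.intEdge i ∈ tileEdges (G.pos (i + 1)) := by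
  rw [G.pos_succ hi, intEdge]
  split_ifs <;> simp [tileEdges, eastEdge, northEdge, westEdge, southEdge]

theorem level_intEdge (i : ℕ) : level (G.intEdge i).1 = level (G.pos i) + 1 := by
  unfold intEdge
  split_ifs <;> simp [level, eastEdge, northEdge] <;> ring

theorem pos_succ_mem_ends_intEdge {i : ℕ} (hi : 1 ≤ i) :
    G.pos (i + 1) ∈ (G.intEdge i).ends := by
  rw [G.pos_succ hi, intEdge]
  split_ifs <;> simp [eastEdge, northEdge, Edge.ends]

theorem mem_ends_intEdge_of_mem_tileVerts {i : ℕ} (hi : 1 ≤ i) {v : Pt}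
    (hv : v ∈ tileVerts (G.pos i)) (hv' : v ∈ tileVerts (G.pos (i + 1))) :
    v ∈ (G.intEdge i).ends := by
  rw [G.pos_succ hi] at hv'
  rw [intEdge]
  generalize G.pos i = p at hv hv' ⊢
  split_ifs at hv' ⊢ <;>
    simp [tileVerts, eastEdge, northEdge, Edge.ends, Prod.ext_iff] at hv hv' ⊢ <;> omega

def firstTiles (n : ℕ) : GridGraph where
  verts := (Finset.Icc 1 n).biUnion fun i => tileVerts (G.pos i)
  edges := (Finset.Icc 1 n).biUnion fun i => tileEdges (G.pos i)
  interior := {e | ∃ i, 1 ≤ i ∧ i < n ∧ e = G.intEdge i}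
  ends_subset e he := by
    obtain ⟨i, hi, he⟩ := Finset.mem_biUnion.1 he
    exact (ends_subset_tileVerts he).trans
      (Finset.subset_biUnion_of_mem (fun i => tileVerts (G.pos i)) hi)
  interior_subset := by
    rintro e ⟨i, hi, hin, rfl⟩
    exact Finset.mem_biUnion.2 ⟨i, Finset.mem_Icc.2 ⟨hi, hin.le⟩, G.intEdge_mem_tileEdges i⟩

theorem isBoundaryMatching_firstTiles_d_iff {a : Edge} {P : Finset Edge} :
    (G.firstTiles G.d).IsBoundaryMatching a P ↔
      G.IsPerfectMatching P ∧ a ∈ P ∧ ∀ e ∈ P, e ≠ a → G.IsBoundaryEdge e := by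
  have hcov (hPE : P ⊆ G.edges) :=
    isExactCover_iff_existsUnique fun e he => (G.firstTiles G.d).ends_subset e (hPE he)
  constructor
  · rintro ⟨hPE, hP, haP, hbd⟩
    exact ⟨⟨hPE, (hcov hPE).1 hP⟩, haP, fun e he hea => ⟨hPE he, hbd e he hea⟩⟩
  · rintro ⟨⟨hPE, hP⟩, haP, hbd⟩
    exact ⟨hPE, (hcov hPE).2 hP, haP, fun e he hea => (hbd e he hea).2⟩

theorem verts_firstTiles_succ (n : ℕ) :
    (G.firstTiles (n + 1)).verts = tileVerts (G.pos (n + 1)) ∪ (G.firstTiles n).verts := by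
  simp only [firstTiles]
  rw [← Finset.insert_Icc_right_eq_Icc_add_one (by omega), Finset.biUnion_insert]

theorem edges_firstTiles_succ (n : ℕ) :
    (G.firstTiles (n + 1)).edges = tileEdges (G.pos (n + 1)) ∪ (G.firstTiles n).edges := by
  simp only [firstTiles]
  rw [← Finset.insert_Icc_right_eq_Icc_add_one (by omega), Finset.biUnion_insert]

theorem interior_firstTiles_succ {n : ℕ} (hn : 1 ≤ n) :
    (G.firstTiles (n + 1)).interior = insert (G.intEdge n) (G.firstTiles n).interior := by
  ext e
  simp only [firstTiles, Set.mem_insert_iff]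
  constructor
  · rintro ⟨i, hi, hin, rfl⟩
    rcases (Nat.lt_succ_iff.1 hin).eq_or_lt with rfl | hin
    exacts [.inl rfl, .inr ⟨i, hi, hin, rfl⟩]
  · rintro (rfl | ⟨i, hi, hin, rfl⟩)
    exacts [⟨n, hn, n.lt_succ_self, rfl⟩, ⟨i, hi, by omega, rfl⟩]

theorem intEdge_notMem_interior_firstTiles {n : ℕ} (hn : 1 ≤ n) :
    G.intEdge n ∉ (G.firstTiles n).interior := by
  rintro ⟨i, hi, hin, h⟩
  have h' := congrArg (fun e : Edge => level e.1) h
  simp only [level_intEdge, G.level_pos hn, G.level_pos hi] at h'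
  omega

theorem mem_ends_intEdge_of_mem_verts_firstTiles {n : ℕ} (hn : 1 ≤ n) {v : Pt}
    (hv : v ∈ tileVerts (G.pos (n + 1))) (hv' : v ∈ (G.firstTiles n).verts) :
    v ∈ (G.intEdge n).ends := by
  obtain ⟨i, hi, hvi⟩ := Finset.mem_biUnion.1 hv'
  obtain ⟨hi, hin⟩ := Finset.mem_Icc.1 hi
  rcases hin.eq_or_lt with rfl | hin
  · exact G.mem_ends_intEdge_of_mem_tileVerts hn hvi hv
  · have h := level_le_of_mem_tileVerts hvi
    rw [G.level_pos hi] at h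
    rw [eq_of_mem_tileVerts_of_level_le hv (by rw [G.level_pos (by omega)]; push_cast; omega)]
    exact G.pos_succ_mem_ends_intEdge hn

theorem nonempty_squareGluing_firstTiles {n : ℕ} (hn : 1 ≤ n) :
    Nonempty (SquareGluing (G.firstTiles n) (G.firstTiles (n + 1))) :=
  SquareGluing.nonempty_of_mem_tileEdges (G.intEdge_mem_tileEdges_succ hn)
    (Finset.mem_biUnion.2 ⟨n, Finset.mem_Icc.2 ⟨hn, le_rfl⟩, G.intEdge_mem_tileEdges n⟩)
    (G.intEdge_notMem_interior_firstTiles hn)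
    (fun _ => G.mem_ends_intEdge_of_mem_verts_firstTiles hn)
    (G.verts_firstTiles_succ n) (G.edges_firstTiles_succ n) (G.interior_firstTiles_succ hn)

theorem existsUnique_isBoundaryMatching_firstTiles {a : Edge} (ha : a ∈ tileEdges (G.pos 1))
    {n : ℕ} (hn : 1 ≤ n) : ∃! P, (G.firstTiles n).IsBoundaryMatching a P := by
  induction n, hn using Nat.le_induction with
  | base =>
    refine GridGraph.existsUnique_isBoundaryMatching_of_tile ha (by simp [firstTiles])
      (by simp [firstTiles]) ?_
    rintro e ⟨i, hi, hi', -⟩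
    omega
  | succ n hn ih =>
    obtain ⟨S⟩ := G.nonempty_squareGluing_firstTiles hn
    exact S.existsUnique_isBoundaryMatching ih

end SnakeGraph

/-- Let `𝒢` be a snake graph and `a` any edge of its first tile
`G₁`.  Then there is exactly one perfect matching `P` of `𝒢` such that `a ∈ P` and
every edge of `P` other than `a` is a boundary edge of `𝒢`. -/
theorem unique_matching_through_first_tile_edge (G : SnakeGraph) (a : Edge)
    (ha : a ∈ tileEdges (G.pos 1)) :
    ∃! P : Finset Edge,
      G.IsPerfectMatching P ∧ a ∈ P ∧ ∀ e ∈ P, e ≠ a → G.IsBoundaryEdge e := by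
  simpa only [G.isBoundaryMatching_firstTiles_d_iff] using
    G.existsUnique_isBoundaryMatching_firstTiles ha G.one_le_d
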